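/- For convex bodies A and B in R^d, a unit vector u, and α, β > 0, the Steiner symmetrization satisfies α S_u A + β S_u B ⊆ S_u(αA + βB). -/

import Mathlib

open MeasureTheory Pointwise
open scoped RealInnerProductSpace

/-- The Steiner symmetrial of `K` with respect to the hyperplane `u^⊥`. -/
noncomputable def steinerSymmetrial (d : ℕ) (u : EuclideanSpace ℝ (Fin d))
    (K : Set (EuclideanSpace ℝ (Fin d))) : Set (EuclideanSpace ℝ (Fin d)) :=
  closure {y | ∃ (c : EuclideanSpace ℝ (Fin d)) (t : ℝ), ⟪c, u⟫ = 0 ∧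
    (∃ s : ℝ, c + s • u ∈ K) ∧
    |t| ≤ (volume {s : ℝ | c + s • u ∈ K}).toReal / 2 ∧ y = c + t • u}

/-- The volume of a convex bounded nonempty set of reals is `sSup - sInf`. -/
lemma vol_convex_real {s : Set ℝ} (hs : Convex ℝ s) (hne : s.Nonempty)
    (hb : Bornology.IsBounded s) :
    (volume s).toReal = sSup s - sInf s := by
  have hbd := hb.bddBelow
  have hba := hb.bddAbove
  have hab : sInf s ≤ sSup s := csInf_le_csSup hne hbd hba
  have h2 : s ⊆ Set.Icc (sInf s) (sSup s) :=
    fun x hx => ⟨csInf_le hbd hx, le_csSup hba hx⟩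
  have h1 : Set.Ioo (sInf s) (sSup s) ⊆ s := by
    intro x hx
    obtain ⟨y, hy, hyx⟩ := exists_lt_of_csInf_lt hne hx.1
    obtain ⟨z, hz, hxz⟩ := exists_lt_of_lt_csSup hne hx.2
    exact hs.ordConnected.out hy hz ⟨hyx.le, hxz.le⟩
  have hv : volume s = ENNReal.ofReal (sSup s - sInf s) :=
    le_antisymm ((measure_mono h2).trans_eq Real.volume_Icc)
      (Real.volume_Ioo ▸ measure_mono h1)
  rw [hv, ENNReal.toReal_ofReal (sub_nonneg.2 hab)]

lemma chord_convex {d : ℕ} (u c : EuclideanSpace ℝ (Fin d))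
    {K : Set (EuclideanSpace ℝ (Fin d))} (hK : Convex ℝ K) :
    Convex ℝ {s : ℝ | c + s • u ∈ K} := by
  have h : {s : ℝ | c + s • u ∈ K}
      = (AffineMap.lineMap c (c + u) : ℝ →ᵃ[ℝ] EuclideanSpace ℝ (Fin d)) ⁻¹' K := by
    ext s
    simp [AffineMap.lineMap_apply, add_sub_cancel_left, add_comm]
  rw [h]
  exact hK.affine_preimage _

lemma chord_bounded {d : ℕ} {u : EuclideanSpace ℝ (Fin d)} (hu : ‖u‖ = 1)
    (c : EuclideanSpace ℝ (Fin d)) {K : Set (EuclideanSpace ℝ (Fin d))}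
    (hK : Bornology.IsBounded K) :
    Bornology.IsBounded {s : ℝ | c + s • u ∈ K} := by
  obtain ⟨R, hR⟩ := isBounded_iff_forall_norm_le.1 hK
  refine (Metric.isBounded_Icc (-(R + ‖c‖)) (R + ‖c‖)).subset ?_
  intro s hs
  have hsu : ‖s • u‖ = |s| := by rw [norm_smul, hu, mul_one, Real.norm_eq_abs]
  have habs : |s| ≤ R + ‖c‖ := by
    have h1 : ‖s • u‖ = ‖(c + s • u) - c‖ := by rw [add_sub_cancel_left]
    have h2 : ‖(c + s • u) - c‖ ≤ ‖c + s • u‖ + ‖c‖ := norm_sub_le _ _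
    have h3 : ‖c + s • u‖ ≤ R := hR _ hs
    rw [← hsu]; linarith
  exact ⟨(abs_le.1 habs).1, (abs_le.1 habs).2⟩

lemma sup_bound {S T U : Set ℝ} {α β : ℝ} (hα : 0 < α) (hβ : 0 < β)
    (hS : S.Nonempty) (hT : T.Nonempty) (hUb : BddAbove U)
    (h : ∀ s ∈ S, ∀ t ∈ T, α * s + β * t ∈ U) :
    α * sSup S + β * sSup T ≤ sSup U := by
  have hstep : ∀ s ∈ S, α * s + β * sSup T ≤ sSup U := by
    intro s hs
    have hsupT : sSup T ≤ (sSup U - α * s) / β := by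
      refine csSup_le hT fun t ht => ?_
      have := le_csSup hUb (h s hs t ht)
      rw [le_div_iff₀ hβ]; linarith
    rw [le_div_iff₀ hβ] at hsupT; linarith
  have hsupS : sSup S ≤ (sSup U - β * sSup T) / α := by
    refine csSup_le hS fun s hs => ?_
    rw [le_div_iff₀ hα]; linarith [hstep s hs]
  rw [le_div_iff₀ hα] at hsupS; linarith

lemma inf_bound {S T U : Set ℝ} {α β : ℝ} (hα : 0 < α) (hβ : 0 < β)
    (hS : S.Nonempty) (hT : T.Nonempty) (hUb : BddBelow U)
    (h : ∀ s ∈ S, ∀ t ∈ T, α * s + β * t ∈ U) :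
    sInf U ≤ α * sInf S + β * sInf T := by
  have hstep : ∀ s ∈ S, sInf U ≤ α * s + β * sInf T := by
    intro s hs
    have hinfT : (sInf U - α * s) / β ≤ sInf T := by
      refine le_csInf hT fun t ht => ?_
      have := csInf_le hUb (h s hs t ht)
      rw [div_le_iff₀ hβ]; linarith
    rw [div_le_iff₀ hβ] at hinfT; linarith
  have hinfS : (sInf U - β * sInf T) / α ≤ sInf S := by
    refine le_csInf hS fun s hs => ?_
    rw [div_le_iff₀ hα]; linarith [hstep s hs]
  rw [div_le_iff₀ hα] at hinfS; linarith

lemma chord_measure_bound {S T U : Set ℝ} {α β : ℝ} (hα : 0 < α) (hβ : 0 < β)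
    (hScv : Convex ℝ S) (hSne : S.Nonempty) (hSb : Bornology.IsBounded S)
    (hTcv : Convex ℝ T) (hTne : T.Nonempty) (hTb : Bornology.IsBounded T)
    (hUcv : Convex ℝ U) (hUb : Bornology.IsBounded U)
    (h : ∀ s ∈ S, ∀ t ∈ T, α * s + β * t ∈ U) :
    α * (volume S).toReal + β * (volume T).toReal ≤ (volume U).toReal := by
  obtain ⟨s₀, hs₀⟩ := hSne
  obtain ⟨t₀, ht₀⟩ := hTne
  have hUne : U.Nonempty := ⟨_, h s₀ hs₀ t₀ ht₀⟩
  rw [vol_convex_real hScv ⟨s₀, hs₀⟩ hSb, vol_convex_real hTcv ⟨t₀, ht₀⟩ hTb,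
    vol_convex_real hUcv hUne hUb]
  have h1 := sup_bound hα hβ ⟨s₀, hs₀⟩ ⟨t₀, ht₀⟩ hUb.bddAbove h
  have h2 := inf_bound hα hβ ⟨s₀, hs₀⟩ ⟨t₀, ht₀⟩ hUb.bddBelow h
  rw [mul_sub, mul_sub]; linarith

lemma steiner_pre_subset {d : ℕ} {u : EuclideanSpace ℝ (Fin d)} (hu : ‖u‖ = 1)
    {A B : Set (EuclideanSpace ℝ (Fin d))}
    (hAb : Bornology.IsBounded A) (hAcv : Convex ℝ A)
    (hBb : Bornology.IsBounded B) (hBcv : Convex ℝ B)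
    {α β : ℝ} (hα : 0 < α) (hβ : 0 < β) :
    α • {y | ∃ (c : EuclideanSpace ℝ (Fin d)) (t : ℝ), ⟪c, u⟫ = 0 ∧
        (∃ s : ℝ, c + s • u ∈ A) ∧
        |t| ≤ (volume {s : ℝ | c + s • u ∈ A}).toReal / 2 ∧ y = c + t • u} +
      β • {y | ∃ (c : EuclideanSpace ℝ (Fin d)) (t : ℝ), ⟪c, u⟫ = 0 ∧
        (∃ s : ℝ, c + s • u ∈ B) ∧
        |t| ≤ (volume {s : ℝ | c + s • u ∈ B}).toReal / 2 ∧ y = c + t • u} ⊆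
      {y | ∃ (c : EuclideanSpace ℝ (Fin d)) (t : ℝ), ⟪c, u⟫ = 0 ∧
        (∃ s : ℝ, c + s • u ∈ α • A + β • B) ∧
        |t| ≤ (volume {s : ℝ | c + s • u ∈ α • A + β • B}).toReal / 2 ∧
        y = c + t • u} := by
  have hKb : Bornology.IsBounded (α • A + β • B) := (hAb.smul₀ α).add (hBb.smul₀ β)
  have hKcv : Convex ℝ (α • A + β • B) := (hAcv.smul α).add (hBcv.smul β)
  rintro x ⟨p, hp, q, hq, rfl⟩
  obtain ⟨p', ⟨c₁, t₁, hc₁, ⟨s₁, hs₁⟩, ht₁, rfl⟩, rfl⟩ := hp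
  obtain ⟨q', ⟨c₂, t₂, hc₂, ⟨s₂, hs₂⟩, ht₂, rfl⟩, rfl⟩ := hq
  refine ⟨α • c₁ + β • c₂, α * t₁ + β * t₂, ?_, ?_, ?_, by module⟩
  · rw [inner_add_left, real_inner_smul_left, real_inner_smul_left, hc₁, hc₂]; ring
  · refine ⟨α * s₁ + β * s₂, ?_⟩
    refine Set.mem_of_eq_of_mem ?_
      (Set.add_mem_add (Set.smul_mem_smul_set (a := α) hs₁)
        (Set.smul_mem_smul_set (a := β) hs₂))
    module
  · -- the key volume estimate
    have hmem : ∀ s ∈ {s : ℝ | c₁ + s • u ∈ A}, ∀ t ∈ {s : ℝ | c₂ + s • u ∈ B},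
        α * s + β * t ∈ {s : ℝ | (α • c₁ + β • c₂) + s • u ∈ α • A + β • B} := by
      intro s hs t ht
      have hs' : c₁ + s • u ∈ A := hs
      have ht' : c₂ + t • u ∈ B := ht
      show (α • c₁ + β • c₂) + (α * s + β * t) • u ∈ α • A + β • B
      refine Set.mem_of_eq_of_mem ?_
        (Set.add_mem_add (Set.smul_mem_smul_set (a := α) hs')
          (Set.smul_mem_smul_set (a := β) ht'))
      module
    have hbound := chord_measure_bound hα hβ
      (chord_convex u c₁ hAcv) ⟨s₁, hs₁⟩ (chord_bounded hu c₁ hAb)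
      (chord_convex u c₂ hBcv) ⟨s₂, hs₂⟩ (chord_bounded hu c₂ hBb)
      (chord_convex u _ hKcv) (chord_bounded hu _ hKb) hmem
    have habs : |α * t₁ + β * t₂| ≤ α * |t₁| + β * |t₂| := by
      calc |α * t₁ + β * t₂| ≤ |α * t₁| + |β * t₂| := abs_add_le _ _
        _ = α * |t₁| + β * |t₂| := by
            rw [abs_mul, abs_mul, abs_of_pos hα, abs_of_pos hβ]
    have h1 : α * |t₁| ≤ α * ((volume {s : ℝ | c₁ + s • u ∈ A}).toReal / 2) :=
      mul_le_mul_of_nonneg_left ht₁ hα.le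
    have h2 : β * |t₂| ≤ β * ((volume {s : ℝ | c₂ + s • u ∈ B}).toReal / 2) :=
      mul_le_mul_of_nonneg_left ht₂ hβ.le
    linarith

/-- Steiner symmetrization and Minkowski combination:
`α S_u A + β S_u B ⊆ S_u(αA + βB)`. -/
theorem steiner_minkowski_subset (d : ℕ)
    (u : EuclideanSpace ℝ (Fin d)) (hu : ‖u‖ = 1)
    (A B : Set (EuclideanSpace ℝ (Fin d)))
    (hAc : IsCompact A) (hAcv : Convex ℝ A) (hAi : (interior A).Nonempty)
    (hBc : IsCompact B) (hBcv : Convex ℝ B) (hBi : (interior B).Nonempty)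
    (α β : ℝ) (hα : 0 < α) (hβ : 0 < β) :
    α • steinerSymmetrial d u A + β • steinerSymmetrial d u B ⊆
      steinerSymmetrial d u (α • A + β • B) := by
  unfold steinerSymmetrial
  set SA := {y | ∃ (c : EuclideanSpace ℝ (Fin d)) (t : ℝ), ⟪c, u⟫ = 0 ∧
    (∃ s : ℝ, c + s • u ∈ A) ∧
    |t| ≤ (volume {s : ℝ | c + s • u ∈ A}).toReal / 2 ∧ y = c + t • u} with hSA
  set SB := {y | ∃ (c : EuclideanSpace ℝ (Fin d)) (t : ℝ), ⟪c, u⟫ = 0 ∧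
    (∃ s : ℝ, c + s • u ∈ B) ∧
    |t| ≤ (volume {s : ℝ | c + s • u ∈ B}).toReal / 2 ∧ y = c + t • u} with hSB
  have hstep1 : α • closure SA + β • closure SB ⊆ closure (α • SA + β • SB) := by
    rw [← closure_smul₀ α SA, ← closure_smul₀ β SB]
    rintro x ⟨p, hp, q, hq, rfl⟩
    exact map_mem_closure₂ continuous_add hp hq fun a ha b hb => Set.add_mem_add ha hb
  refine hstep1.trans (closure_mono ?_)
  exact steiner_pre_subset hu hAc.isBounded hAcv hBc.isBounded hBcv hα hβ
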